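/- Suppose ∂M/∂t = iR M + ω T for a real-valued function R(s,t), where ω = ⟨∂M/∂t, T⟩. Then equating the mixed partial derivatives ∂²M/∂t∂s = ∂²M/∂s∂t yields ∂R/∂s = (i/2)(ω ψ̄ − ω̄ ψ). -/

import Mathlib

open scoped BigOperators RealInnerProductSpace
open Complex

noncomputable section

abbrev E3 : Type := EuclideanSpace ℝ (Fin 3)

/-- Partial derivative with respect to the first (arclength) variable. -/
noncomputable def dS {V : Type} [NormedAddCommGroup V] [NormedSpace ℝ V]
    (F : ℝ → ℝ → V) : ℝ → ℝ → V := fun s t => deriv (fun x => F x t) s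

/-- Partial derivative with respect to the second (time) variable. -/
noncomputable def dT {V : Type} [NormedAddCommGroup V] [NormedSpace ℝ V]
    (F : ℝ → ℝ → V) : ℝ → ℝ → V := fun s t => deriv (fun x => F s x) t

/-- Complexification of a real vector in `ℝ³`. -/
noncomputable def cvec (v : E3) : Fin 3 → ℂ := fun i => (v i : ℂ)

/-- Bilinear extension of the real inner product to `ℂ³`. -/
noncomputable def cip (u v : Fin 3 → ℂ) : ℂ := ∑ i, u i * v i

/-- The phase `θ(s,t) = ∫₀^s τ(s',t) ds'`. -/
noncomputable def θf (τ : ℝ → ℝ → ℝ) : ℝ → ℝ → ℝ :=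
  fun s t => ∫ x in (0:ℝ)..s, τ x t

/-- The Hasimoto wave function `ψ = k e^{iθ}`. -/
noncomputable def ψf (k τ : ℝ → ℝ → ℝ) : ℝ → ℝ → ℂ :=
  fun s t => (k s t : ℂ) * Complex.exp (Complex.I * (θf τ s t : ℂ))

/-- The complexified frame vector `M = (N + iB) e^{iθ}`. -/
noncomputable def Mf (N B : ℝ → ℝ → E3) (τ : ℝ → ℝ → ℝ) : ℝ → ℝ → (Fin 3 → ℂ) :=
  fun s t => Complex.exp (Complex.I * (θf τ s t : ℂ)) •
    (cvec (N s t) + Complex.I • cvec (B s t))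

/-- `ω = ⟨∂M/∂t, T⟩` (bilinear inner product). -/
noncomputable def ωf (T N B : ℝ → ℝ → E3) (τ : ℝ → ℝ → ℝ) : ℝ → ℝ → ℂ :=
  fun s t => cip (dT (Mf N B τ) s t) (cvec (T s t))

/-! ### Auxiliary material -/

noncomputable def ηf (τ : ℝ → ℝ → ℝ) : ℝ → ℝ → ℝ :=
  fun s t => ∫ x in (0:ℝ)..s, dT τ x t

section helpers
variable {V : Type} [NormedAddCommGroup V] [NormedSpace ℝ V]

lemma diffS {F : ℝ → ℝ → V} (hF : ContDiff ℝ (⊤ : ℕ∞) (Function.uncurry F)) (s t : ℝ) :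
    DifferentiableAt ℝ (fun x => F x t) s := by
  have h : (fun x => F x t) = Function.uncurry F ∘ (fun x : ℝ => (x, t)) := rfl
  rw [h]
  exact ((hF.differentiable (by simp)).differentiableAt).comp s
    (DifferentiableAt.prodMk differentiableAt_id (differentiableAt_const t))

lemma diffT {F : ℝ → ℝ → V} (hF : ContDiff ℝ (⊤ : ℕ∞) (Function.uncurry F)) (s t : ℝ) :
    DifferentiableAt ℝ (fun x => F s x) t := by
  have h : (fun x => F s x) = Function.uncurry F ∘ (fun x : ℝ => (s, x)) := rfl
  rw [h]
  exact ((hF.differentiable (by simp)).differentiableAt).comp t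
    (DifferentiableAt.prodMk (differentiableAt_const s) differentiableAt_id)

lemma hdS {F : ℝ → ℝ → V} (hF : ContDiff ℝ (⊤ : ℕ∞) (Function.uncurry F)) (s t : ℝ) :
    HasDerivAt (fun x => F x t) (dS F s t) s := (diffS hF s t).hasDerivAt

lemma hdT {F : ℝ → ℝ → V} (hF : ContDiff ℝ (⊤ : ℕ∞) (Function.uncurry F)) (s t : ℝ) :
    HasDerivAt (fun x => F s x) (dT F s t) t := (diffT hF s t).hasDerivAt

lemma dS_eq_fderiv {F : ℝ → ℝ → V} (hF : ContDiff ℝ (⊤ : ℕ∞) (Function.uncurry F)) (s t : ℝ) :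
    dS F s t = fderiv ℝ (Function.uncurry F) (s, t) (1, 0) := by
  have h1 : HasFDerivAt (Function.uncurry F) (fderiv ℝ (Function.uncurry F) (s, t)) (s, t) :=
    ((hF.differentiable (by simp)).differentiableAt).hasFDerivAt
  have h2 : HasDerivAt (fun x : ℝ => (x, t)) ((1 : ℝ), (0 : ℝ)) s :=
    HasDerivAt.prodMk (hasDerivAt_id s) (hasDerivAt_const s t)
  exact (h1.comp_hasDerivAt s h2).deriv

lemma dT_eq_fderiv {F : ℝ → ℝ → V} (hF : ContDiff ℝ (⊤ : ℕ∞) (Function.uncurry F)) (s t : ℝ) :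
    dT F s t = fderiv ℝ (Function.uncurry F) (s, t) (0, 1) := by
  have h1 : HasFDerivAt (Function.uncurry F) (fderiv ℝ (Function.uncurry F) (s, t)) (s, t) :=
    ((hF.differentiable (by simp)).differentiableAt).hasFDerivAt
  have h2 : HasDerivAt (fun x : ℝ => (s, x)) ((0 : ℝ), (1 : ℝ)) t :=
    HasDerivAt.prodMk (hasDerivAt_const t s) (hasDerivAt_id t)
  exact (h1.comp_hasDerivAt t h2).deriv

lemma smooth_dS {F : ℝ → ℝ → V} (hF : ContDiff ℝ (⊤ : ℕ∞) (Function.uncurry F)) :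
    ContDiff ℝ (⊤ : ℕ∞) (Function.uncurry (dS F)) := by
  have h : Function.uncurry (dS F) = fun p : ℝ × ℝ => fderiv ℝ (Function.uncurry F) p (1, 0) := by
    funext p
    exact dS_eq_fderiv hF p.1 p.2
  rw [h]
  exact (hF.fderiv_right (by simp)).clm_apply contDiff_const

lemma smooth_dT {F : ℝ → ℝ → V} (hF : ContDiff ℝ (⊤ : ℕ∞) (Function.uncurry F)) :
    ContDiff ℝ (⊤ : ℕ∞) (Function.uncurry (dT F)) := by
  have h : Function.uncurry (dT F) = fun p : ℝ × ℝ => fderiv ℝ (Function.uncurry F) p (0, 1) := by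
    funext p
    exact dT_eq_fderiv hF p.1 p.2
  rw [h]
  exact (hF.fderiv_right (by simp)).clm_apply contDiff_const

lemma contS {F : ℝ → ℝ → V} (hF : ContDiff ℝ (⊤ : ℕ∞) (Function.uncurry F)) (t : ℝ) :
    Continuous (fun x => F x t) := by
  have h : (fun x => F x t) = Function.uncurry F ∘ (fun x : ℝ => (x, t)) := rfl
  rw [h]
  exact hF.continuous.comp (continuous_id.prodMk continuous_const)

end helpers

/-! ### cvec and cip lemmas -/

lemma cvec_add (u v : E3) : cvec (u + v) = cvec u + cvec v := by
  funext i; simp [cvec]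

lemma cvec_smul (a : ℝ) (v : E3) : cvec (a • v) = (a : ℂ) • cvec v := by
  funext i; simp [cvec]

lemma star_cvec (v : E3) : star (cvec v) = cvec v := by
  funext i; simp [cvec]

lemma cip_comm (u v : Fin 3 → ℂ) : cip u v = cip v u := by
  simp [cip, mul_comm]

lemma cip_smul_left (a : ℂ) (u v : Fin 3 → ℂ) : cip (a • u) v = a * cip u v := by
  simp [cip, Finset.mul_sum, mul_assoc]

lemma cip_smul_right (a : ℂ) (u v : Fin 3 → ℂ) : cip u (a • v) = a * cip u v := by
  simp [cip, Finset.mul_sum]; ring_nf; simp [mul_comm, mul_left_comm]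

lemma cip_add_left (u v w : Fin 3 → ℂ) : cip (u + v) w = cip u w + cip v w := by
  simp [cip, add_mul, Finset.sum_add_distrib]

lemma cip_add_right (u v w : Fin 3 → ℂ) : cip u (v + w) = cip u v + cip u w := by
  simp [cip, mul_add, Finset.sum_add_distrib]

lemma cip_neg_left (u v : Fin 3 → ℂ) : cip (-u) v = -cip u v := by
  simp [cip]

lemma cip_sub_left (u v w : Fin 3 → ℂ) : cip (u - v) w = cip u w - cip v w := by
  simp [sub_eq_add_neg, cip_add_left, cip_neg_left]

lemma cip_sub_right (u v w : Fin 3 → ℂ) : cip u (v - w) = cip u v - cip u w := by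
  rw [cip_comm, cip_sub_left, cip_comm w u, cip_comm v u]

lemma cip_cvec_cvec (u v : E3) : cip (cvec u) (cvec v) = ((⟪u, v⟫ : ℝ) : ℂ) := by
  rw [PiLp.inner_apply]
  simp [cip, cvec, mul_comm]

lemma cip_star_right (v : E3) (u : Fin 3 → ℂ) :
    cip (cvec v) (star u) = starRingEnd ℂ (cip (cvec v) u) := by
  simp [cip, cvec, map_sum]

lemma hasDerivAt_cvec {f : ℝ → E3} {f' : E3} {x : ℝ} (h : HasDerivAt f f' x) :
    HasDerivAt (fun y => cvec (f y)) (cvec f') x := by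
  rw [hasDerivAt_pi]
  intro i
  have h1 : HasDerivAt (fun y => f y i) (f' i) x :=
    (EuclideanSpace.proj (𝕜 := ℝ) i).hasFDerivAt.comp_hasDerivAt x h
  exact Complex.ofRealCLM.hasFDerivAt.comp_hasDerivAt x h1

lemma hasDerivAt_cip {u v : ℝ → Fin 3 → ℂ} {u' v' : Fin 3 → ℂ} {x : ℝ}
    (hu : HasDerivAt u u' x) (hv : HasDerivAt v v' x) :
    HasDerivAt (fun y => cip (u y) (v y)) (cip u' (v x) + cip (u x) v') x := by
  have h : ∀ i, HasDerivAt (fun y => u y i * v y i) (u' i * v x i + u x i * v' i) x :=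
    fun i => (hasDerivAt_pi.1 hu i).mul (hasDerivAt_pi.1 hv i)
  have h2 := HasDerivAt.fun_sum (fun i (_ : i ∈ Finset.univ) => h i)
  simpa [cip, Finset.sum_add_distrib] using h2

/-! ### Derivatives of the phase -/

section phase
open MeasureTheory Metric

variable {τ : ℝ → ℝ → ℝ}

lemma hasDerivAt_θ_s (hτsm : ContDiff ℝ (⊤ : ℕ∞) (Function.uncurry τ)) (s t : ℝ) :
    HasDerivAt (fun x => θf τ x t) (τ s t) s :=
  ((contS hτsm t).integral_hasStrictDerivAt 0 s).hasDerivAt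

lemma hasDerivAt_η_s (hτsm : ContDiff ℝ (⊤ : ℕ∞) (Function.uncurry τ)) (s t : ℝ) :
    HasDerivAt (fun x => ηf τ x t) (dT τ s t) s :=
  ((contS (smooth_dT hτsm) t).integral_hasStrictDerivAt 0 s).hasDerivAt

lemma hasDerivAt_θ_t (hτsm : ContDiff ℝ (⊤ : ℕ∞) (Function.uncurry τ)) (s t : ℝ) :
    HasDerivAt (fun u => θf τ s u) (ηf τ s t) t := by
  obtain ⟨C, hC⟩ : ∃ C, ∀ p ∈ (Set.uIcc (0:ℝ) s) ×ˢ (closedBall t 1),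
      ‖Function.uncurry (dT τ) p‖ ≤ C := by
    have hK : IsCompact ((Set.uIcc (0:ℝ) s) ×ˢ (closedBall t 1)) :=
      isCompact_uIcc.prod (isCompact_closedBall t 1)
    exact hK.exists_bound_of_continuousOn ((smooth_dT hτsm).continuous.continuousOn)
  have key := intervalIntegral.hasDerivAt_integral_of_dominated_loc_of_deriv_le
    (F := fun u x => τ x u) (F' := fun u x => dT τ x u) (x₀ := t)
    (a := 0) (b := s) (bound := fun _ => C) (μ := volume) (Metric.ball_mem_nhds t one_pos)
    ?_ ?_ ?_ ?_ ?_ ?_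
  · exact key.2
  · exact Filter.Eventually.of_forall fun u => ((contS hτsm u).aestronglyMeasurable)
  · exact ((contS hτsm t)).intervalIntegrable 0 s
  · exact ((contS (smooth_dT hτsm) t)).aestronglyMeasurable
  · refine Filter.Eventually.of_forall fun x hx u hu => ?_
    exact hC (x, u) ⟨Set.uIoc_subset_uIcc hx, ball_subset_closedBall hu⟩
  · exact intervalIntegrable_const
  · exact Filter.Eventually.of_forall fun x _ u _ => hdT hτsm x u

end phase

theorem stmt6
    (γ T N B : ℝ → ℝ → E3) (k τ : ℝ → ℝ → ℝ)
    (hγsm : ContDiff ℝ (⊤ : ℕ∞) (Function.uncurry γ))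
    (hTsm : ContDiff ℝ (⊤ : ℕ∞) (Function.uncurry T))
    (hNsm : ContDiff ℝ (⊤ : ℕ∞) (Function.uncurry N))
    (hBsm : ContDiff ℝ (⊤ : ℕ∞) (Function.uncurry B))
    (hksm : ContDiff ℝ (⊤ : ℕ∞) (Function.uncurry k))
    (hτsm : ContDiff ℝ (⊤ : ℕ∞) (Function.uncurry τ))
    (hkpos : ∀ s t, 0 < k s t)
    (hTdef : ∀ s t, dS γ s t = T s t)
    (horth : ∀ s t, ⟪T s t, T s t⟫ = 1 ∧ ⟪N s t, N s t⟫ = 1 ∧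
      ⟪B s t, B s t⟫ = 1 ∧ ⟪T s t, N s t⟫ = 0 ∧
      ⟪T s t, B s t⟫ = 0 ∧ ⟪N s t, B s t⟫ = 0)
    (hFS1 : ∀ s t, dS T s t = k s t • N s t)
    (hFS2 : ∀ s t, dS N s t = -(k s t) • T s t + τ s t • B s t)
    (hFS3 : ∀ s t, dS B s t = -(τ s t) • N s t)
    (ν μ α : ℝ → ℝ → ℝ)
    (hνsm : ContDiff ℝ (⊤ : ℕ∞) (Function.uncurry ν))
    (hμsm : ContDiff ℝ (⊤ : ℕ∞) (Function.uncurry μ))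
    (hαsm : ContDiff ℝ (⊤ : ℕ∞) (Function.uncurry α))
    (hkin : ∀ s t, dT γ s t = ν s t • T s t + μ s t • N s t + α s t • B s t)
    (hmixγ : ∀ s t, dS (dT γ) s t = dT (dS γ) s t)
    (hmixT : ∀ s t, dS (dT T) s t = dT (dS T) s t)
    (hmixN : ∀ s t, dS (dT N) s t = dT (dS N) s t)
    (hmixB : ∀ s t, dS (dT B) s t = dT (dS B) s t)
    (R : ℝ → ℝ → ℝ)
    (hMt : ∀ s t, dT (Mf N B τ) s t =
      (Complex.I * (R s t : ℂ)) • Mf N B τ s t + ωf T N B τ s t • cvec (T s t))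
    :
    ∀ s t, ((dS R s t : ℝ) : ℂ) =
      Complex.I / 2 * (ωf T N B τ s t * starRingEnd ℂ (ψf k τ s t) -
        starRingEnd ℂ (ωf T N B τ s t) * ψf k τ s t) := by
  -- abbreviations
  set Ee : ℝ → ℝ → ℂ := fun s t => Complex.exp (Complex.I * (θf τ s t : ℂ)) with hEe
  set Pp : ℝ → ℝ → (Fin 3 → ℂ) := fun s t => cvec (N s t) + Complex.I • cvec (B s t) with hPp
  set Qq : ℝ → ℝ → (Fin 3 → ℂ) := fun s t => cvec (dT N s t) + Complex.I • cvec (dT B s t)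
    with hQq
  have hMEP : ∀ s t, Mf N B τ s t = Ee s t • Pp s t := fun s t => rfl
  -- derivative of E in s
  have hE_s : ∀ s t, HasDerivAt (fun x => Ee x t) ((Complex.I * τ s t) * Ee s t) s := by
    intro s t
    have h0 : HasDerivAt (fun x => ((θf τ x t : ℝ) : ℂ)) ((τ s t : ℂ)) s :=
      Complex.ofRealCLM.hasFDerivAt.comp_hasDerivAt s (hasDerivAt_θ_s hτsm s t)
    have h1 := (h0.const_mul Complex.I).cexp
    simpa [hEe, mul_comm] using h1
  have hE_t : ∀ s t, HasDerivAt (fun u => Ee s u) ((Complex.I * ηf τ s t) * Ee s t) t := by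
    intro s t
    have h0 : HasDerivAt (fun u => ((θf τ s u : ℝ) : ℂ)) ((ηf τ s t : ℂ)) t :=
      Complex.ofRealCLM.hasFDerivAt.comp_hasDerivAt t (hasDerivAt_θ_t hτsm s t)
    have h1 := (h0.const_mul Complex.I).cexp
    simpa [hEe, mul_comm] using h1
  -- derivative of P
  have hP_s : ∀ s t, HasDerivAt (fun x => Pp x t)
      (cvec (dS N s t) + Complex.I • cvec (dS B s t)) s := fun s t =>
    (hasDerivAt_cvec (hdS hNsm s t)).add ((hasDerivAt_cvec (hdS hBsm s t)).const_smul Complex.I)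
  have hP_t : ∀ s t, HasDerivAt (fun u => Pp s u)
      (cvec (dT N s t) + Complex.I • cvec (dT B s t)) t := fun s t =>
    (hasDerivAt_cvec (hdT hNsm s t)).add ((hasDerivAt_cvec (hdT hBsm s t)).const_smul Complex.I)
  -- dS M = -ψ T
  have hM_s : ∀ s t, HasDerivAt (fun x => Mf N B τ x t)
      (-(ψf k τ s t) • cvec (T s t)) s := by
    intro s t
    have h := (hE_s s t).smul (hP_s s t)
    have hval : Ee s t • (cvec (dS N s t) + Complex.I • cvec (dS B s t)) +
        ((Complex.I * τ s t) * Ee s t) • Pp s t =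
        -(ψf k τ s t) • cvec (T s t) := by
      rw [hFS2 s t, hFS3 s t]
      funext i
      simp only [hPp, Pi.add_apply, Pi.smul_apply, smul_eq_mul, cvec, cvec_add, cvec_smul,
        PiLp.add_apply, PiLp.smul_apply, PiLp.neg_apply, Pi.neg_apply, ψf, hEe,
        Complex.ofReal_neg, Complex.ofReal_mul, neg_mul, smul_eq_mul]
      push_cast
      ring_nf
      simp [Complex.I_sq]
      ring
    rw [hval] at h
    exact h
  -- dT M
  have hM_t : ∀ s t, HasDerivAt (fun u => Mf N B τ s u)
      ((Complex.I * ηf τ s t) • Mf N B τ s t + Ee s t • Qq s t) t := by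
    intro s t
    have h := (hE_t s t).smul (hP_t s t)
    have hval : Ee s t • (cvec (dT N s t) + Complex.I • cvec (dT B s t)) +
        ((Complex.I * ηf τ s t) * Ee s t) • Pp s t =
        (Complex.I * ηf τ s t) • Mf N B τ s t + Ee s t • Qq s t := by
      rw [hMEP, hQq, smul_smul]
      ring_nf
    rw [hval] at h
    exact h
  have hF1 : ∀ s t, dT (Mf N B τ) s t =
      (Complex.I * ηf τ s t) • Mf N B τ s t + Ee s t • Qq s t := fun s t => (hM_t s t).deriv
  -- key : derivative of (dT M) in s
  have hKey : ∀ s t, HasDerivAt (fun x => dT (Mf N B τ) x t)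
      (-(((dT k s t : ℝ) : ℂ) + Complex.I * k s t * ηf τ s t) • (Ee s t • cvec (T s t))
        - ψf k τ s t • cvec (dT T s t)) s := by
    intro s t
    have hfun : (fun x => dT (Mf N B τ) x t) =
        fun x => (Complex.I * ηf τ x t) • Mf N B τ x t + Ee x t • Qq x t :=
      funext fun x => hF1 x t
    rw [hfun]
    -- derivative of coefficient I * η in s
    have hη : HasDerivAt (fun x => (Complex.I * (ηf τ x t : ℂ)))
        (Complex.I * ((dT τ s t : ℝ) : ℂ)) s := by
      have h0 : HasDerivAt (fun x => ((ηf τ x t : ℝ) : ℂ)) (((dT τ s t : ℝ) : ℂ)) s :=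
        Complex.ofRealCLM.hasFDerivAt.comp_hasDerivAt s (hasDerivAt_η_s hτsm s t)
      exact h0.const_mul Complex.I
    have hQ_s : HasDerivAt (fun x => Qq x t)
        (cvec (dS (dT N) s t) + Complex.I • cvec (dS (dT B) s t)) s :=
      (hasDerivAt_cvec (hdS (smooth_dT hNsm) s t)).add
        ((hasDerivAt_cvec (hdS (smooth_dT hBsm) s t)).const_smul Complex.I)
    have h := (hη.smul (hM_s s t)).add ((hE_s s t).smul hQ_s)
    -- compute the mixed partials of N and B via Frenet-Serret
    have hdtdsN : dT (dS N) s t = (-(dT k s t)) • T s t + (-(k s t)) • dT T s t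
        + ((dT τ s t) • B s t + (τ s t) • dT B s t) := by
      have hfn : (fun u => dS N s u) = fun u => -(k s u) • T s u + τ s u • B s u :=
        funext fun u => hFS2 s u
      have hd : HasDerivAt (fun u => -(k s u) • T s u + τ s u • B s u)
          ((-(dT k s t)) • T s t + (-(k s t)) • dT T s t
            + ((dT τ s t) • B s t + (τ s t) • dT B s t)) t := by
        have h1 := ((hdT hksm s t).neg.smul (hdT hTsm s t))
        have h2 := ((hdT hτsm s t).smul (hdT hBsm s t))
        have h3 := h1.add h2
        exact h3.congr_deriv (by simp only [Pi.neg_apply]; abel)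
      rw [show dT (dS N) s t = deriv (fun u => dS N s u) t from rfl, hfn]
      exact hd.deriv
    have hdtdsB : dT (dS B) s t = (-(dT τ s t)) • N s t + (-(τ s t)) • dT N s t := by
      have hfn : (fun u => dS B s u) = fun u => -(τ s u) • N s u :=
        funext fun u => hFS3 s u
      have hd : HasDerivAt (fun u => -(τ s u) • N s u)
          ((-(dT τ s t)) • N s t + (-(τ s t)) • dT N s t) t := by
        have h1 := ((hdT hτsm s t).neg.smul (hdT hNsm s t))
        exact h1.congr_deriv (by simp only [Pi.neg_apply]; abel)
      rw [show dT (dS B) s t = deriv (fun u => dS B s u) t from rfl, hfn]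
      exact hd.deriv
    have hval : (Complex.I * (ηf τ s t : ℂ)) • (-(ψf k τ s t) • cvec (T s t))
          + (Complex.I * ((dT τ s t : ℝ) : ℂ)) • Mf N B τ s t
          + (Ee s t • (cvec (dS (dT N) s t) + Complex.I • cvec (dS (dT B) s t))
            + ((Complex.I * τ s t) * Ee s t) • Qq s t) =
        -(((dT k s t : ℝ) : ℂ) + Complex.I * k s t * ηf τ s t) • (Ee s t • cvec (T s t))
          - ψf k τ s t • cvec (dT T s t) := by
      rw [hmixN s t, hmixB s t, hdtdsN, hdtdsB, hMEP]
      funext i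
      simp only [hPp, hQq, Pi.add_apply, Pi.sub_apply, Pi.smul_apply, Pi.neg_apply,
        smul_eq_mul, cvec_add, cvec_smul, cvec, PiLp.add_apply, PiLp.smul_apply,
        PiLp.neg_apply, ψf, hEe, neg_mul]
      push_cast
      ring_nf
      simp [Complex.I_sq]
      ring
    rw [hval] at h
    exact h
  -- algebraic inner product identities
  have horthTT := fun s t => (horth s t).1
  have horthNN := fun s t => (horth s t).2.1
  have horthBB := fun s t => (horth s t).2.2.1
  have horthTN := fun s t => (horth s t).2.2.2.1
  have horthTB := fun s t => (horth s t).2.2.2.2.1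
  have horthNB := fun s t => (horth s t).2.2.2.2.2
  have hEconj : ∀ s t, Ee s t * starRingEnd ℂ (Ee s t) = 1 := by
    intro s t
    rw [hEe]
    rw [← Complex.exp_conj]
    rw [← Complex.exp_add]
    simp
  have hstarM : ∀ s t, star (Mf N B τ s t) =
      starRingEnd ℂ (Ee s t) • (cvec (N s t) - Complex.I • cvec (B s t)) := by
    intro s t
    rw [hMEP]
    rw [star_smul, star_add, star_smul]
    rw [star_cvec, star_cvec]
    simp [sub_eq_add_neg]
  -- A1 : cip M (star M) = 2
  have hA1 : ∀ s t, cip (Mf N B τ s t) (star (Mf N B τ s t)) = 2 := by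
    intro s t
    rw [hstarM, hMEP, hPp]
    rw [cip_smul_left, cip_smul_right, cip_add_left, cip_sub_right, cip_sub_right,
      cip_smul_left, cip_smul_right, cip_smul_right, cip_smul_left,
      cip_cvec_cvec, cip_cvec_cvec, cip_cvec_cvec, cip_cvec_cvec,
      horthNN, horthBB]
    have h2 := hEconj s t
    have h3 : ((⟪N s t, B s t⟫ : ℝ) : ℂ) = ((⟪B s t, N s t⟫ : ℝ) : ℂ) := by
      rw [real_inner_comm (N s t) (B s t)]
    push_cast
    linear_combination (1 - Complex.I * Complex.I) * h2 - Complex.I_mul_I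
      - (Ee s t * starRingEnd ℂ (Ee s t) * Complex.I) * h3
  -- A2 : cip (cvec T) (star M) = 0
  have hA2 : ∀ s t, cip (cvec (T s t)) (star (Mf N B τ s t)) = 0 := by
    intro s t
    rw [hstarM]
    rw [cip_smul_right, cip_sub_right, cip_smul_right, cip_cvec_cvec, cip_cvec_cvec,
      horthTN, horthTB]
    push_cast
    ring
  -- A3 : cip M (cvec T) = 0
  have hA3 : ∀ s t, cip (Mf N B τ s t) (cvec (T s t)) = 0 := by
    intro s t
    rw [hMEP, hPp]
    rw [cip_smul_left, cip_add_left, cip_smul_left, cip_cvec_cvec, cip_cvec_cvec]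
    have h1 : ((⟪N s t, T s t⟫ : ℝ) : ℂ) = 0 := by
      rw [real_inner_comm (T s t) (N s t), horthTN s t]; norm_num
    have h2 : ((⟪B s t, T s t⟫ : ℝ) : ℂ) = 0 := by
      rw [real_inner_comm (T s t) (B s t), horthTB s t]; norm_num
    linear_combination (Ee s t) * h1 + (Ee s t * Complex.I) * h2
  -- A5 : cip (dT M) (star M) = 2 i R
  have hA5 : ∀ s t, cip (dT (Mf N B τ) s t) (star (Mf N B τ s t)) =
      (2 * Complex.I) * (R s t : ℂ) := by
    intro s t
    rw [hMt s t, cip_add_left, cip_smul_left, cip_smul_left, hA1, hA2]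
    ring
  -- A6 : cip (cvec (dT T)) M = -ω
  have hA6 : ∀ s t, cip (cvec (dT T s t)) (Mf N B τ s t) = -(ωf T N B τ s t) := by
    intro s t
    have hz : (fun u => cip (cvec (T s u)) (Mf N B τ s u)) = fun _ => (0 : ℂ) := by
      funext u
      rw [hMEP, hPp, cip_smul_right, cip_add_right, cip_smul_right, cip_cvec_cvec,
        cip_cvec_cvec, horthTN, horthTB]
      push_cast
      ring
    have hd1 : HasDerivAt (fun u => cip (cvec (T s u)) (Mf N B τ s u))
        (cip (cvec (dT T s t)) (Mf N B τ s t) + cip (cvec (T s t)) (dT (Mf N B τ) s t)) t := by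
      refine hasDerivAt_cip (hasDerivAt_cvec (hdT hTsm s t)) ?_
      rw [hF1 s t]
      exact hM_t s t
    have hd2 : HasDerivAt (fun u => cip (cvec (T s u)) (Mf N B τ s u)) 0 t := by
      rw [hz]; exact hasDerivAt_const t 0
    have h0 := hd1.unique hd2
    have : cip (cvec (T s t)) (dT (Mf N B τ) s t) = ωf T N B τ s t := cip_comm _ _
    rw [this] at h0
    linear_combination h0
  -- final assembly
  intro s t
  have hA6' : cip (cvec (dT T s t)) (star (Mf N B τ s t)) =
      -(starRingEnd ℂ (ωf T N B τ s t)) := by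
    rw [cip_star_right, hA6 s t, map_neg]
  have hstar_s : HasDerivAt (fun x => star (Mf N B τ x t))
      (star (-(ψf k τ s t) • cvec (T s t))) s := (hM_s s t).star
  have hsv : star (-(ψf k τ s t) • cvec (T s t)) =
      (-(starRingEnd ℂ (ψf k τ s t))) • cvec (T s t) := by
    rw [star_smul, star_cvec]
    simp
  have hg := hasDerivAt_cip (hKey s t) hstar_s
  have hω : cip (dT (Mf N B τ) s t) (cvec (T s t)) = ωf T N B τ s t := rfl
  have hval : cip (-(((dT k s t : ℝ) : ℂ) + Complex.I * k s t * ηf τ s t) •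
        (Ee s t • cvec (T s t)) - ψf k τ s t • cvec (dT T s t)) (star (Mf N B τ s t))
      + cip (dT (Mf N B τ) s t) (star (-(ψf k τ s t) • cvec (T s t))) =
      ψf k τ s t * starRingEnd ℂ (ωf T N B τ s t)
        - starRingEnd ℂ (ψf k τ s t) * ωf T N B τ s t := by
    rw [hsv, cip_sub_left, cip_smul_left, cip_smul_left, cip_smul_left, cip_smul_right,
      hA2 s t, hA6', hω]
    ring
  rw [hval] at hg
  have hgfun : (fun x => cip (dT (Mf N B τ) x t) (star (Mf N B τ x t))) =
      fun x => (2 * Complex.I) * ((R x t : ℝ) : ℂ) := funext fun x => hA5 x t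
  rw [hgfun] at hg
  have h2I : ((2 : ℂ) * Complex.I) ≠ 0 := by simp [Complex.I_ne_zero]
  have hR : HasDerivAt (fun x => ((R x t : ℝ) : ℂ))
      ((2 * Complex.I)⁻¹ * (ψf k τ s t * starRingEnd ℂ (ωf T N B τ s t)
        - starRingEnd ℂ (ψf k τ s t) * ωf T N B τ s t)) s := by
    have h := hg.const_mul ((2 * Complex.I)⁻¹)
    have heq : (fun x => (2 * Complex.I)⁻¹ * ((2 * Complex.I) * ((R x t : ℝ) : ℂ))) =
        fun x => ((R x t : ℝ) : ℂ) := by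
      funext x
      rw [← mul_assoc, inv_mul_cancel₀ h2I, one_mul]
    rw [heq] at h
    convert h using 1
    try ring
  set c : ℂ := (2 * Complex.I)⁻¹ * (ψf k τ s t * starRingEnd ℂ (ωf T N B τ s t)
      - starRingEnd ℂ (ψf k τ s t) * ωf T N B τ s t) with hcdef
  have hRr : HasDerivAt (fun x => R x t) (c.re) s := by
    have h := Complex.reCLM.hasFDerivAt.comp_hasDerivAt s hR
    simpa [Function.comp_def] using h
  have hdSR : dS R s t = c.re := hRr.deriv
  have hc : c = Complex.I / 2 * (ωf T N B τ s t * starRingEnd ℂ (ψf k τ s t) -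
      starRingEnd ℂ (ωf T N B τ s t) * ψf k τ s t) := by
    rw [hcdef, mul_inv, Complex.inv_I]
    ring
  have hconj : starRingEnd ℂ c = c := by
    rw [hc]
    rw [map_mul, map_sub, map_mul, map_mul, map_div₀, Complex.conj_I]
    simp only [Complex.conj_conj, map_ofNat]
    push_cast
    ring
  have hre : ((c.re : ℝ) : ℂ) = c := Complex.conj_eq_iff_re.mp hconj
  rw [hdSR, hre, hc]
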